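/- Let m1, m2, r, p be positive integers, ρ1 ≥ 0, let H be a real p×m1 matrix, H_{ρ1} = I_{m1} + ρ1 Hᵀ H, and W ∈ ℂ^{m1×m2}. Define h(X,Y) = ½(‖XY−W‖_F² + ρ1‖HXY‖_F²), ∇_X h(X,Y) = (XY−W)Y* + ρ1 HᵀH X Y Y*, and ∇_Y h(X,Y) = X*(XY−W) + ρ1 X* HᵀH X Y. Then for all X, ΔX ∈ ℂ^{m1×r} and Y, ΔY ∈ ℂ^{r×m2}: (1) h(X+ΔX, Y) ≤ h(X,Y) + Re tr((∇_X h(X,Y))* ΔX) + (L_1(Y)/2)‖ΔX‖_F² with L_1(Y) = ‖H_{ρ1}‖_2 ‖Y Y*‖_2, and (2) h(X, Y+ΔY) ≤ h(X,Y) + Re tr((∇_Y h(X,Y))* ΔY) + (L_2(X)/2)‖ΔY‖_F² with L_2(X) = ‖X* H_{ρ1} X‖_2. -/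

import Mathlib

open Matrix Complex BigOperators

noncomputable section

/-- Squared Frobenius norm of a complex matrix. -/
def frobSqC {a b : ℕ} (M : Matrix (Fin a) (Fin b) ℂ) : ℝ :=
  ∑ i, ∑ j, ‖M i j‖ ^ 2

/-- Frobenius norm of a complex matrix. -/
def frobNorm {a b : ℕ} (M : Matrix (Fin a) (Fin b) ℂ) : ℝ :=
  Real.sqrt (frobSqC M)

/-- Spectral norm (largest singular value) of a complex matrix. -/
def specNorm {a b : ℕ} (M : Matrix (Fin a) (Fin b) ℂ) : ℝ :=
  ‖LinearMap.toContinuousLinearMap (Matrix.toEuclideanLin M)‖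

/-- The objective `h(X,Y) = ½(‖XY−W‖_F² + ρ1‖HXY‖_F²)`. -/
def hObj {m1 m2 r p : ℕ} (ρ1 : ℝ) (H : Matrix (Fin p) (Fin m1) ℝ)
    (W : Matrix (Fin m1) (Fin m2) ℂ)
    (X : Matrix (Fin m1) (Fin r) ℂ) (Y : Matrix (Fin r) (Fin m2) ℂ) : ℝ :=
  (1 / 2) * (frobSqC (X * Y - W) + ρ1 * frobSqC ((H.map Complex.ofReal) * (X * Y)))

/-!
As a function of `Z = X Y`, `h` is quadratic with Hessian `A = I + ρ₁ HᵀH`, so exactly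
`h(Z + D) = h(Z) + Re tr((A Z − W)* D) + ½ Re tr(D* A D)`.
The two block steps are `D = ΔX Y` and `D = X ΔY`; cyclicity of the trace turns the linear term
into the stated partial gradients. The quadratic term is bounded column by column through
`Re ⟪v, A v⟫ ≤ ‖A‖₂ ‖v‖²`, i.e. `Re tr(D* A D) ≤ ‖A‖₂ ‖D‖_F²`. For `D = X ΔY` this is applied to
`X* A X` and `ΔY`; for `D = ΔX Y` it is applied to `A` and then, through
`‖ΔX Y‖_F² = Re tr(ΔX (Y Y*) ΔX*)`, once more to `Y Y*` and `ΔX*`.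
-/

theorem re_trace_conjTranspose_mul_comm {m n : Type*} [Fintype m] [Fintype n]
    (M N : Matrix m n ℂ) : (Nᴴ * M).trace.re = (Mᴴ * N).trace.re := by
  rw [← conjTranspose_conjTranspose M, ← conjTranspose_mul, trace_conjTranspose,
    conjTranspose_conjTranspose, star_def, conj_re]

theorem frobSqC_eq_re_trace {a b : ℕ} (M : Matrix (Fin a) (Fin b) ℂ) :
    frobSqC M = (Mᴴ * M).trace.re := by
  rw [frobSqC, Finset.sum_comm]
  simp [trace, mul_apply, conj_mul', ← ofReal_pow]

theorem frobSqC_nonneg {a b : ℕ} (M : Matrix (Fin a) (Fin b) ℂ) : 0 ≤ frobSqC M := by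
  unfold frobSqC; positivity

theorem frobNorm_sq {a b : ℕ} (M : Matrix (Fin a) (Fin b) ℂ) : frobNorm M ^ 2 = frobSqC M :=
  Real.sq_sqrt (frobSqC_nonneg M)

theorem frobSqC_conjTranspose {a b : ℕ} (M : Matrix (Fin a) (Fin b) ℂ) :
    frobSqC Mᴴ = frobSqC M := by
  rw [frobSqC_eq_re_trace, frobSqC_eq_re_trace, conjTranspose_conjTranspose, trace_mul_comm]

theorem frobSqC_add {a b : ℕ} (M N : Matrix (Fin a) (Fin b) ℂ) :
    frobSqC (M + N) = frobSqC M + 2 * (Mᴴ * N).trace.re + frobSqC N := by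
  simp only [frobSqC_eq_re_trace, conjTranspose_add, Matrix.add_mul, Matrix.mul_add, trace_add,
    add_re, re_trace_conjTranspose_mul_comm M N]
  ring

theorem specNorm_nonneg {a b : ℕ} (M : Matrix (Fin a) (Fin b) ℂ) : 0 ≤ specNorm M :=
  norm_nonneg _

theorem re_inner_apply_self_le {𝕜 E : Type*} [RCLike 𝕜] [NormedAddCommGroup E]
    [InnerProductSpace 𝕜 E] (T : E →L[𝕜] E) (v : E) :
    RCLike.re (inner 𝕜 v (T v)) ≤ ‖T‖ * ‖v‖ ^ 2 :=
  calc RCLike.re (inner 𝕜 v (T v)) ≤ ‖v‖ * ‖T v‖ := re_inner_le_norm v (T v)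
    _ ≤ ‖v‖ * (‖T‖ * ‖v‖) := by gcongr; exact T.le_opNorm v
    _ = ‖T‖ * ‖v‖ ^ 2 := by ring

theorem re_trace_conjTranspose_mul_mul_le {n k : ℕ} (A : Matrix (Fin n) (Fin n) ℂ)
    (M : Matrix (Fin n) (Fin k) ℂ) : (Mᴴ * A * M).trace.re ≤ specNorm A * frobSqC M := by
  set T := LinearMap.toContinuousLinearMap (toEuclideanLin A)
  set v : Fin k → EuclideanSpace ℂ (Fin n) := fun j => WithLp.toLp 2 (M.col j)
  have htrace : (Mᴴ * A * M).trace = ∑ j, inner ℂ (v j) (T (v j)) := by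
    rw [Matrix.mul_assoc]
    -- the `j`-th diagonal entry of `Mᴴ (A M)` is `⟪Mⱼ, A Mⱼ⟫` for the column `Mⱼ`, definitionally
    exact Finset.sum_congr rfl fun j _ => dotProduct_comm (star (M.col j)) ((A * M).col j)
  have hfrob : frobSqC M = ∑ j, ‖v j‖ ^ 2 := by
    simp [v, frobSqC, EuclideanSpace.norm_sq_eq, Finset.sum_comm (γ := Fin n)]
  rw [htrace, re_sum, hfrob, Finset.mul_sum]
  exact Finset.sum_le_sum fun j _ => re_inner_apply_self_le T (v j)

theorem frobSqC_mul_le {n k m : ℕ} (D : Matrix (Fin n) (Fin k) ℂ)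
    (Y : Matrix (Fin k) (Fin m) ℂ) : frobSqC (D * Y) ≤ specNorm (Y * Yᴴ) * frobSqC D := by
  calc frobSqC (D * Y) = (Dᴴᴴ * (Y * Yᴴ) * Dᴴ).trace.re := by
        rw [← frobSqC_conjTranspose, frobSqC_eq_re_trace]
        simp only [conjTranspose_mul, conjTranspose_conjTranspose, Matrix.mul_assoc]
    _ ≤ specNorm (Y * Yᴴ) * frobSqC D := by
        rw [← frobSqC_conjTranspose D]
        exact re_trace_conjTranspose_mul_mul_le _ _

def regLsqObj {n k p : ℕ} (ρ : ℝ) (Hc : Matrix (Fin p) (Fin n) ℂ) (W Z : Matrix (Fin n) (Fin k) ℂ) :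
    ℝ :=
  (1 / 2) * (frobSqC (Z - W) + ρ * frobSqC (Hc * Z))

theorem regLsqObj_add {n k p : ℕ} (ρ : ℝ) (Hc : Matrix (Fin p) (Fin n) ℂ)
    (W Z D : Matrix (Fin n) (Fin k) ℂ) :
    regLsqObj ρ Hc W (Z + D) =
      regLsqObj ρ Hc W Z + (((1 + (ρ : ℂ) • (Hcᴴ * Hc)) * Z - W)ᴴ * D).trace.re +
        (Dᴴ * (1 + (ρ : ℂ) • (Hcᴴ * Hc)) * D).trace.re / 2 := by
  set A := 1 + (ρ : ℂ) • (Hcᴴ * Hc)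
  have hlin : ((A * Z - W)ᴴ * D).trace.re =
      ((Z - W)ᴴ * D).trace.re + ρ * ((Hc * Z)ᴴ * (Hc * D)).trace.re := by
    have : A * Z - W = (Z - W) + (ρ : ℂ) • (Hcᴴ * Hc * Z) := by
      simp only [A, Matrix.add_mul, Matrix.one_mul, Matrix.smul_mul]; abel
    rw [this, conjTranspose_add, Matrix.add_mul, trace_add, add_re, conjTranspose_smul,
      Matrix.smul_mul, trace_smul, star_def, conj_ofReal, smul_eq_mul, re_ofReal_mul]
    simp only [conjTranspose_mul, conjTranspose_conjTranspose, Matrix.mul_assoc]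
  have hquad : (Dᴴ * A * D).trace.re = frobSqC D + ρ * frobSqC (Hc * D) := by
    rw [frobSqC_eq_re_trace, frobSqC_eq_re_trace]
    simp only [A, Matrix.mul_add, Matrix.add_mul, Matrix.mul_one, Matrix.mul_smul,
      Matrix.smul_mul, trace_add, trace_smul, add_re, smul_eq_mul, re_ofReal_mul,
      conjTranspose_mul, Matrix.mul_assoc]
  have hres : Z + D - W = (Z - W) + D := by abel
  simp only [regLsqObj, hres, Matrix.mul_add, frobSqC_add, hlin, hquad]
  ring

theorem map_ofReal_transpose_mul_self {m n : Type*} [Fintype m] (H : Matrix m n ℝ) :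
    (Hᵀ * H).map ofReal = (H.map ofReal)ᴴ * H.map ofReal := by
  ext i j
  simp [mul_apply]

theorem hObj_eq_regLsqObj {m1 m2 r p : ℕ} (ρ : ℝ) (H : Matrix (Fin p) (Fin m1) ℝ)
    (W : Matrix (Fin m1) (Fin m2) ℂ) (X : Matrix (Fin m1) (Fin r) ℂ)
    (Y : Matrix (Fin r) (Fin m2) ℂ) : hObj ρ H W X Y = regLsqObj ρ (H.map ofReal) W (X * Y) :=
  rfl

theorem hObj_add_left_le {m1 m2 r p : ℕ} (ρ : ℝ) (H : Matrix (Fin p) (Fin m1) ℝ)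
    (W : Matrix (Fin m1) (Fin m2) ℂ) (X ΔX : Matrix (Fin m1) (Fin r) ℂ)
    (Y : Matrix (Fin r) (Fin m2) ℂ) :
    hObj ρ H W (X + ΔX) Y ≤
      hObj ρ H W X Y +
        ((((X * Y - W) * Yᴴ + (ρ : ℂ) • ((Hᵀ * H).map ofReal * X * Y * Yᴴ))ᴴ * ΔX).trace).re +
        (specNorm (1 + (ρ : ℂ) • (Hᵀ * H).map ofReal) * specNorm (Y * Yᴴ) / 2) *
          frobNorm ΔX ^ 2 := by
  rw [hObj_eq_regLsqObj, hObj_eq_regLsqObj, Matrix.add_mul, regLsqObj_add, frobNorm_sq,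
    map_ofReal_transpose_mul_self]
  set Hc := H.map ofReal
  set A := 1 + (ρ : ℂ) • (Hcᴴ * Hc)
  have hgrad : (X * Y - W) * Yᴴ + (ρ : ℂ) • (Hcᴴ * Hc * X * Y * Yᴴ) = (A * (X * Y) - W) * Yᴴ := by
    simp only [A, Matrix.add_mul, Matrix.sub_mul, Matrix.one_mul, Matrix.smul_mul,
      Matrix.mul_assoc]
    abel
  have hlin : (((A * (X * Y) - W) * Yᴴ)ᴴ * ΔX).trace = ((A * (X * Y) - W)ᴴ * (ΔX * Y)).trace := by
    rw [conjTranspose_mul, conjTranspose_conjTranspose, Matrix.mul_assoc, trace_mul_comm,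
      Matrix.mul_assoc]
  have hquad : ((ΔX * Y)ᴴ * A * (ΔX * Y)).trace.re ≤ specNorm A * specNorm (Y * Yᴴ) * frobSqC ΔX :=
    calc ((ΔX * Y)ᴴ * A * (ΔX * Y)).trace.re ≤ specNorm A * frobSqC (ΔX * Y) :=
          re_trace_conjTranspose_mul_mul_le A _
      _ ≤ specNorm A * (specNorm (Y * Yᴴ) * frobSqC ΔX) :=
          mul_le_mul_of_nonneg_left (frobSqC_mul_le ΔX Y) (specNorm_nonneg A)
      _ = specNorm A * specNorm (Y * Yᴴ) * frobSqC ΔX := (mul_assoc _ _ _).symm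
  rw [hgrad, hlin]
  linarith

theorem hObj_add_right_le {m1 m2 r p : ℕ} (ρ : ℝ) (H : Matrix (Fin p) (Fin m1) ℝ)
    (W : Matrix (Fin m1) (Fin m2) ℂ) (X : Matrix (Fin m1) (Fin r) ℂ)
    (Y ΔY : Matrix (Fin r) (Fin m2) ℂ) :
    hObj ρ H W X (Y + ΔY) ≤
      hObj ρ H W X Y +
        (((Xᴴ * (X * Y - W) + (ρ : ℂ) • (Xᴴ * (Hᵀ * H).map ofReal * X * Y))ᴴ * ΔY).trace).re +
        (specNorm (Xᴴ * (1 + (ρ : ℂ) • (Hᵀ * H).map ofReal) * X) / 2) * frobNorm ΔY ^ 2 := by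
  rw [hObj_eq_regLsqObj, hObj_eq_regLsqObj, Matrix.mul_add, regLsqObj_add, frobNorm_sq,
    map_ofReal_transpose_mul_self]
  set Hc := H.map ofReal
  set A := 1 + (ρ : ℂ) • (Hcᴴ * Hc)
  have hgrad : Xᴴ * (X * Y - W) + (ρ : ℂ) • (Xᴴ * (Hcᴴ * Hc) * X * Y) = Xᴴ * (A * (X * Y) - W) := by
    simp only [A, Matrix.mul_sub, Matrix.add_mul, Matrix.one_mul, Matrix.smul_mul,
      Matrix.mul_add, Matrix.mul_smul, Matrix.mul_assoc]
    abel
  have hlin : ((Xᴴ * (A * (X * Y) - W))ᴴ * ΔY).trace = ((A * (X * Y) - W)ᴴ * (X * ΔY)).trace := by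
    rw [conjTranspose_mul, conjTranspose_conjTranspose, Matrix.mul_assoc]
  have hquad : (X * ΔY)ᴴ * A * (X * ΔY) = ΔYᴴ * (Xᴴ * A * X) * ΔY := by
    simp only [conjTranspose_mul, Matrix.mul_assoc]
  have hquad_le := re_trace_conjTranspose_mul_mul_le (Xᴴ * A * X) ΔY
  rw [hgrad, hlin, hquad]
  linarith

theorem block_descent_lemma_general (m1 m2 r p : ℕ)
    (ρ1 : ℝ)
    (H : Matrix (Fin p) (Fin m1) ℝ)
    (W : Matrix (Fin m1) (Fin m2) ℂ) :
    ∀ (X ΔX : Matrix (Fin m1) (Fin r) ℂ) (Y ΔY : Matrix (Fin r) (Fin m2) ℂ),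
      (hObj ρ1 H W (X + ΔX) Y ≤
        hObj ρ1 H W X Y +
          ((((X * Y - W) * Yᴴ +
              (ρ1 : ℂ) • (((Hᵀ * H).map Complex.ofReal) * X * Y * Yᴴ))ᴴ * ΔX).trace).re +
          (specNorm ((1 : Matrix (Fin m1) (Fin m1) ℂ) +
              (ρ1 : ℂ) • ((Hᵀ * H).map Complex.ofReal)) * specNorm (Y * Yᴴ) / 2) *
            frobNorm ΔX ^ 2) ∧
      (hObj ρ1 H W X (Y + ΔY) ≤
        hObj ρ1 H W X Y +
          (((Xᴴ * (X * Y - W) +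
              (ρ1 : ℂ) • (Xᴴ * ((Hᵀ * H).map Complex.ofReal) * X * Y))ᴴ * ΔY).trace).re +
          (specNorm (Xᴴ * ((1 : Matrix (Fin m1) (Fin m1) ℂ) +
              (ρ1 : ℂ) • ((Hᵀ * H).map Complex.ofReal)) * X) / 2) *
            frobNorm ΔY ^ 2) :=
  fun X ΔX Y ΔY => ⟨hObj_add_left_le ρ1 H W X ΔX Y, hObj_add_right_le ρ1 H W X Y ΔY⟩

/-- the block descent lemma for
`h(X,Y) = ½(‖XY−W‖_F² + ρ1‖HXY‖_F²)`. -/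
theorem block_descent_lemma (m1 m2 r p : ℕ)
    (hm1 : 0 < m1) (hm2 : 0 < m2) (hr : 0 < r) (hp : 0 < p)
    (ρ1 : ℝ) (hρ1 : 0 ≤ ρ1)
    (H : Matrix (Fin p) (Fin m1) ℝ)
    (W : Matrix (Fin m1) (Fin m2) ℂ) :
    ∀ (X ΔX : Matrix (Fin m1) (Fin r) ℂ) (Y ΔY : Matrix (Fin r) (Fin m2) ℂ),
      (hObj ρ1 H W (X + ΔX) Y ≤
        hObj ρ1 H W X Y +
          ((((X * Y - W) * Yᴴ +
              (ρ1 : ℂ) • (((Hᵀ * H).map Complex.ofReal) * X * Y * Yᴴ))ᴴ * ΔX).trace).re +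
          (specNorm ((1 : Matrix (Fin m1) (Fin m1) ℂ) +
              (ρ1 : ℂ) • ((Hᵀ * H).map Complex.ofReal)) * specNorm (Y * Yᴴ) / 2) *
            frobNorm ΔX ^ 2) ∧
      (hObj ρ1 H W X (Y + ΔY) ≤
        hObj ρ1 H W X Y +
          (((Xᴴ * (X * Y - W) +
              (ρ1 : ℂ) • (Xᴴ * ((Hᵀ * H).map Complex.ofReal) * X * Y))ᴴ * ΔY).trace).re +
          (specNorm (Xᴴ * ((1 : Matrix (Fin m1) (Fin m1) ℂ) +
              (ρ1 : ℂ) • ((Hᵀ * H).map Complex.ofReal)) * X) / 2) *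
            frobNorm ΔY ^ 2) :=
  block_descent_lemma_general m1 m2 r p ρ1 H W
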